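/- arXiv:1703.03843 — 2 statements merged into one kernel-verified Lean document; each statement's English description precedes it below -/
import Mathlib

section
/- Let U ⊆ ℂ² be open, φ : ℂ → ℂ holomorphic on an open set V, and h : U → ℂ holomorphic with h(U) ⊆ V. Assume that for all (x,y) ∈ U one has φ(h(x,y)) + x + y·h(x,y) = 0 and φ'(h(x,y)) + y ≠ 0. Then h satisfies the shock-wave equation ∂h/∂y = h · ∂h/∂x on U. -/
/-- If `(1 : h(x,y) : -x - y·h(x,y))` parametrizes the intersection of the line
`L_{(x,y)}` with the graph of `φ` (implicit equation `φ(h) + x + y·h = 0`) and the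
intersection is transverse (`φ'(h) + y ≠ 0`), then `h` is a shock wave:
`∂h/∂y = h · ∂h/∂x`. -/
theorem implicit_line_intersection_is_shock_wave
    (U : Set (ℂ × ℂ)) (hU : IsOpen U) (V : Set ℂ) (hV : IsOpen V)
    (φ : ℂ → ℂ) (hφ : DifferentiableOn ℂ φ V)
    (h : ℂ × ℂ → ℂ) (hh : DifferentiableOn ℂ h U)
    (hmaps : Set.MapsTo h U V)
    (heq : ∀ z ∈ U, φ (h z) + z.1 + z.2 * h z = 0)
    (hne : ∀ z ∈ U, deriv φ (h z) + z.2 ≠ 0) :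
    ∀ z ∈ U, fderiv ℂ h z (0, 1) = h z * fderiv ℂ h z (1, 0) := by
  intro z hz
  have hd : DifferentiableAt ℂ h z := hh.differentiableAt (hU.mem_nhds hz)
  have hφd : DifferentiableAt ℂ φ (h z) :=
    hφ.differentiableAt (hV.mem_nhds (hmaps hz))
  set a := deriv φ (h z) with ha
  set Dh := fderiv ℂ h z with hDh
  have h1 : HasFDerivAt (fun w => φ (h w)) (a • Dh) z :=
    hφd.hasDerivAt.comp_hasFDerivAt z hd.hasFDerivAt
  have h2 : HasFDerivAt (fun w : ℂ × ℂ => w.1)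
      (ContinuousLinearMap.fst ℂ ℂ ℂ) z := hasFDerivAt_fst
  have h3 : HasFDerivAt (fun w : ℂ × ℂ => w.2 * h w)
      (z.2 • Dh + h z • ContinuousLinearMap.snd ℂ ℂ ℂ) z :=
    hasFDerivAt_snd.mul hd.hasFDerivAt
  have hF : HasFDerivAt (fun w => φ (h w) + w.1 + w.2 * h w)
      (a • Dh + ContinuousLinearMap.fst ℂ ℂ ℂ +
        (z.2 • Dh + h z • ContinuousLinearMap.snd ℂ ℂ ℂ)) z :=
    (h1.add h2).add h3
  have hev : (fun w => φ (h w) + w.1 + w.2 * h w) =ᶠ[nhds z] fun _ => (0 : ℂ) := by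
    filter_upwards [hU.mem_nhds hz] with w hw using heq w hw
  have hF0 : HasFDerivAt (fun w => φ (h w) + w.1 + w.2 * h w)
      (0 : (ℂ × ℂ) →L[ℂ] ℂ) z :=
    (hasFDerivAt_const (0 : ℂ) z).congr_of_eventuallyEq hev
  have hLz : (a • Dh + ContinuousLinearMap.fst ℂ ℂ ℂ +
      (z.2 • Dh + h z • ContinuousLinearMap.snd ℂ ℂ ℂ)) = 0 := hF.unique hF0
  have e1 : (a + z.2) * Dh (1, 0) + 1 = 0 := by
    have := congrArg (fun L : (ℂ × ℂ) →L[ℂ] ℂ => L (1, 0)) hLz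
    simp at this
    linear_combination this
  have e2 : (a + z.2) * Dh (0, 1) + h z = 0 := by
    have := congrArg (fun L : (ℂ × ℂ) →L[ℂ] ℂ => L (0, 1)) hLz
    simp at this
    linear_combination this
  have hne' : a + z.2 ≠ 0 := hne z hz
  have key : (a + z.2) * Dh (0, 1) = (a + z.2) * (h z * Dh (1, 0)) := by
    linear_combination e2 - h z * e1
  exact mul_left_cancel₀ hne' key
end

section
/- Let D ⊆ ℂ² be open and h₁, …, h_d : D → ℂ holomorphic functions each satisfying the shock-wave equation ∂h_j/∂y = h_j·∂h_j/∂x. For 1 ≤ k ≤ d let Σ_k = (-1)^k·e_k(h₁,…,h_d), where e_k is the k-th elementary symmetric polynomial. Then on D: Σ_d·∂Σ₁/∂x + ∂Σ_d/∂y = 0, and for 1 ≤ k ≤ d-1, Σ_k·∂Σ₁/∂x + ∂Σ_k/∂y = ∂Σ_{k+1}/∂x. -/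
open scoped BigOperators

lemma key_alg {d k : ℕ} (a u : Fin d → ℂ) :
    (∑ s ∈ Finset.univ.powersetCard k, ∏ j ∈ s, a j) * (∑ i, u i)
      - ∑ s ∈ Finset.univ.powersetCard k, ∑ i ∈ s, u i * ∏ j ∈ s, a j
    = ∑ t ∈ Finset.univ.powersetCard (k+1), ∑ i ∈ t,
        (∏ j ∈ t.erase i, a j) * u i := by
  have h1 : (∑ s ∈ Finset.univ.powersetCard k, ∏ j ∈ s, a j) * (∑ i, u i)
      = ∑ s ∈ Finset.univ.powersetCard k, ∑ i, u i * ∏ j ∈ s, a j := by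
    rw [Finset.sum_mul]
    exact Finset.sum_congr rfl fun s _ => by
      rw [Finset.mul_sum]; exact Finset.sum_congr rfl fun i _ => mul_comm _ _
  rw [h1, ← Finset.sum_sub_distrib]
  have h2 : ∀ s ∈ Finset.univ.powersetCard k,
      (∑ i, u i * ∏ j ∈ s, a j) - ∑ i ∈ s, u i * ∏ j ∈ s, a j
        = ∑ i ∈ Finset.univ \ s, u i * ∏ j ∈ s, a j := by
    intro s hs
    rw [← Finset.sum_sdiff (Finset.subset_univ s)]
    ring
  rw [Finset.sum_congr rfl h2, Finset.sum_sigma', Finset.sum_sigma']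
  refine Finset.sum_bij' (fun p _ => ⟨insert p.2 p.1, p.2⟩) (fun p _ => ⟨p.1.erase p.2, p.2⟩)
    ?_ ?_ ?_ ?_ ?_
  · rintro ⟨s, i⟩ hp
    simp only [Finset.mem_sigma, Finset.mem_powersetCard, Finset.mem_sdiff, Finset.mem_univ,
      true_and] at hp ⊢
    obtain ⟨⟨-, hc⟩, hi⟩ := hp
    refine ⟨⟨Finset.subset_univ _, ?_⟩, Finset.mem_insert_self _ _⟩
    rw [Finset.card_insert_of_notMem hi, hc]
  · rintro ⟨t, i⟩ hp
    simp only [Finset.mem_sigma, Finset.mem_powersetCard, Finset.mem_sdiff, Finset.mem_univ,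
      true_and] at hp ⊢
    obtain ⟨⟨-, hc⟩, hi⟩ := hp
    refine ⟨⟨Finset.subset_univ _, ?_⟩, Finset.notMem_erase _ _⟩
    rw [Finset.card_erase_of_mem hi, hc]; rfl
  · rintro ⟨s, i⟩ hp
    simp only [Finset.mem_sigma, Finset.mem_powersetCard, Finset.mem_sdiff, Finset.mem_univ,
      true_and] at hp
    simp [Finset.erase_insert hp.2]
  · rintro ⟨t, i⟩ hp
    simp only [Finset.mem_sigma, Finset.mem_powersetCard, Finset.mem_sdiff, Finset.mem_univ,
      true_and] at hp
    simp [Finset.insert_erase hp.2]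
  · rintro ⟨s, i⟩ hp
    simp only [Finset.mem_sigma, Finset.mem_powersetCard, Finset.mem_sdiff, Finset.mem_univ,
      true_and] at hp
    simp [Finset.erase_insert hp.2, mul_comm]

/-- Forward direction of Henkin–Michel's Lemma 16: the signed elementary symmetric
functions `Sig k = (-1)^k e_k(h₁,…,h_d)` of a family of shock waves satisfy
`Σ_d·∂Σ₁/∂x + ∂Σ_d/∂y = 0` and `Σ_k·∂Σ₁/∂x + ∂Σ_k/∂y = ∂Σ_{k+1}/∂x`. -/
theorem symmetric_functions_of_shock_waves_system
    (D : Set (ℂ × ℂ)) (hD : IsOpen D) (d : ℕ) (hd : 1 ≤ d)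
    (h : Fin d → ℂ × ℂ → ℂ)
    (hh : ∀ j, DifferentiableOn ℂ (h j) D)
    (hshock : ∀ j, ∀ z ∈ D,
      fderiv ℂ (h j) z (0, 1) = h j z * fderiv ℂ (h j) z (1, 0))
    (Sig : ℕ → ℂ × ℂ → ℂ)
    (hSig : ∀ k, Sig k = fun z =>
      (-1 : ℂ) ^ k * ∑ s ∈ Finset.univ.powersetCard k, ∏ j ∈ s, h j z) :
    (∀ z ∈ D,
        Sig d z * fderiv ℂ (Sig 1) z (1, 0) + fderiv ℂ (Sig d) z (0, 1) = 0) ∧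
      ∀ k, 1 ≤ k → k ≤ d - 1 → ∀ z ∈ D,
        Sig k z * fderiv ℂ (Sig 1) z (1, 0) + fderiv ℂ (Sig k) z (0, 1) =
          fderiv ℂ (Sig (k + 1)) z (1, 0) := by
  have hmain : ∀ k, ∀ z ∈ D,
      Sig k z * fderiv ℂ (Sig 1) z (1, 0) + fderiv ℂ (Sig k) z (0, 1) =
        fderiv ℂ (Sig (k + 1)) z (1, 0) := by
    intro k z hz
    have hmem : D ∈ nhds z := hD.mem_nhds hz
    have hdiff : ∀ j, DifferentiableAt ℂ (h j) z := fun j =>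
      (hh j).differentiableAt hmem
    have hder : ∀ m : ℕ, HasFDerivAt (Sig m)
        (((-1 : ℂ) ^ m) • ∑ s ∈ Finset.univ.powersetCard m, ∑ i ∈ s,
          (∏ j ∈ s.erase i, h j z) • fderiv ℂ (h i) z) z := by
      intro m
      rw [hSig m]
      exact (HasFDerivAt.fun_sum fun s _ =>
        HasFDerivAt.finset_prod fun i _ => (hdiff i).hasFDerivAt).const_mul _
    have happ : ∀ (m : ℕ) (v : ℂ × ℂ), fderiv ℂ (Sig m) z v =
        (-1 : ℂ) ^ m * ∑ s ∈ Finset.univ.powersetCard m, ∑ i ∈ s,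
          (∏ j ∈ s.erase i, h j z) * fderiv ℂ (h i) z v := by
      intro m v
      rw [(hder m).fderiv]
      simp [ContinuousLinearMap.sum_apply, smul_eq_mul]
    have hS1 : fderiv ℂ (Sig 1) z (1, 0) = -∑ j, fderiv ℂ (h j) z (1, 0) := by
      rw [happ 1 (1, 0)]
      simp [Finset.powersetCard_one, Finset.sum_map]
    have hY : fderiv ℂ (Sig k) z (0, 1) =
        (-1 : ℂ) ^ k * ∑ s ∈ Finset.univ.powersetCard k, ∑ i ∈ s,
          fderiv ℂ (h i) z (1, 0) * ∏ j ∈ s, h j z := by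
      rw [happ k (0, 1)]
      congr 1
      refine Finset.sum_congr rfl fun s _ => Finset.sum_congr rfl fun i hi => ?_
      rw [hshock i z hz, ← Finset.mul_prod_erase s _ hi]
      ring
    rw [hS1, hY, happ (k + 1) (1, 0), hSig k]
    rw [← key_alg (fun j => h j z) (fun i => fderiv ℂ (h i) z (1, 0))]
    ring
  refine ⟨fun z hz => ?_, fun k _ _ z hz => hmain k z hz⟩
  rw [hmain d z hz]
  have hmem : D ∈ nhds z := hD.mem_nhds hz
  have hdiff : ∀ j, DifferentiableAt ℂ (h j) z := fun j =>
    (hh j).differentiableAt hmem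
  have hder : HasFDerivAt (Sig (d + 1))
      (((-1 : ℂ) ^ (d + 1)) • ∑ s ∈ Finset.univ.powersetCard (d + 1), ∑ i ∈ s,
        (∏ j ∈ s.erase i, h j z) • fderiv ℂ (h i) z) z := by
    rw [hSig (d + 1)]
    exact (HasFDerivAt.fun_sum fun s _ =>
      HasFDerivAt.finset_prod fun i _ => (hdiff i).hasFDerivAt).const_mul _
  rw [hder.fderiv]
  have hemp : (Finset.univ : Finset (Fin d)).powersetCard (d + 1) = ∅ := by
    rw [Finset.powersetCard_eq_empty]; simp
  simp [hemp]
end
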